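/- arXiv:0805.3277 — 2 statements merged into one kernel-verified Lean document; each statement's English description precedes it below -/
import Mathlib

section
/- For any simple graph G and integers r, s with 1 ≤ r and 1 ≤ s, the partial list coloring numbers satisfy λ_r(G) + λ_s(G) ≥ λ_{r+s}(G). -/
open SimpleGraph

/-- `c` properly colors each vertex of `S` from its list `L`. -/
def IsPartialListColoring {V : Type*} (G : SimpleGraph V) (L : V → Finset ℕ)
    (S : Set V) (c : V → ℕ) : Prop :=
  (∀ v ∈ S, c v ∈ L v) ∧ ∀ u ∈ S, ∀ v ∈ S, G.Adj u v → c u ≠ c v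

/-- `λ_L(G)`: the maximum number of vertices properly colorable from the lists of `L`. -/
noncomputable def lamL {V : Type*} (G : SimpleGraph V) (L : V → Finset ℕ) : ℕ :=
  sSup {k | ∃ (S : Finset V) (c : V → ℕ), S.card = k ∧ IsPartialListColoring G L S c}

/-- `λ_t(G)`: the minimum of `λ_L(G)` over all `t`-list assignments `L`. -/
noncomputable def lam {V : Type*} (G : SimpleGraph V) (t : ℕ) : ℕ :=
  sInf {m | ∃ L : V → Finset ℕ, (∀ v, (L v).card = t) ∧ lamL G L = m}

/-- `G` admits a full proper coloring from the lists of `L`. -/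
def ListColorable {V : Type*} (G : SimpleGraph V) (L : V → Finset ℕ) : Prop :=
  ∃ c : V → ℕ, (∀ v, c v ∈ L v) ∧ ∀ u v, G.Adj u v → c u ≠ c v

/-- The list chromatic number of `G`. -/
noncomputable def listChromaticNumber {V : Type*} (G : SimpleGraph V) : ℕ :=
  sInf {k | ∀ L : V → Finset ℕ, (∀ v, (L v).card = k) → ListColorable G L}

/-! Take `r`- and `s`-list assignments `L₁`, `L₂` attaining `λ_r(G)` and `λ_s(G)`, and relabel
their colours by `x ↦ 2x` and `x ↦ 2x + 1` so that `L v := 2 L₁ v ∪ (2 L₂ v + 1)` is an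
`(r + s)`-list assignment. In any partial `L`-colouring the vertices with an even colour form a
partial `L₁`-colouring and those with an odd colour a partial `L₂`-colouring (after relabelling
back), so `λ_{r+s}(G) ≤ λ_L(G) ≤ λ_r(G) + λ_s(G)`. -/

section

variable {V : Type*} (G : SimpleGraph V)

lemma IsPartialListColoring.filter {L L' : V → Finset ℕ} {S : Finset V} {c : V → ℕ}
    (h : IsPartialListColoring G L S c) (p : V → Prop) [DecidablePred p]
    (hp : ∀ v ∈ S, p v → c v ∈ L' v) : IsPartialListColoring G L' (S.filter p) c := by
  simp only [Finset.coe_filter]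
  exact ⟨fun v hv => hp v hv.1 hv.2, fun u hu v hv => h.2 u hu.1 v hv.1⟩

lemma IsPartialListColoring.comp_invFun_of_image {L : V → Finset ℕ} {S : Set V} {c : V → ℕ}
    {f : ℕ → ℕ} (hf : f.Injective) (h : IsPartialListColoring G (fun v => (L v).image f) S c) :
    IsPartialListColoring G L S (Function.invFun f ∘ c) := by
  have hpre : ∀ v ∈ S, ∃ y ∈ L v, f y = c v := fun v hv => Finset.mem_image.mp (h.1 v hv)
  have hinv : ∀ v ∈ S, f (Function.invFun f (c v)) = c v := fun v hv =>
    Function.invFun_eq <| let ⟨y, _, hy⟩ := hpre v hv; ⟨y, hy⟩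
  refine ⟨fun v hv => ?_, fun u hu v hv hadj heq => h.2 u hu v hv hadj ?_⟩
  · obtain ⟨y, hy, hyc⟩ := hpre v hv
    simpa [← hyc, Function.leftInverse_invFun hf y] using hy
  · rw [← hinv u hu, ← hinv v hv]
    exact congrArg f heq

lemma card_le_lamL [Fintype V] {L : V → Finset ℕ} {S : Finset V} {c : V → ℕ}
    (h : IsPartialListColoring G L S c) : S.card ≤ lamL G L :=
  le_csSup ⟨Fintype.card V, by rintro _ ⟨S, c, rfl, -⟩; exact S.card_le_univ⟩ ⟨S, c, rfl, h⟩

lemma lamL_le {L : V → Finset ℕ} {m : ℕ}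
    (h : ∀ (S : Finset V) (c : V → ℕ), IsPartialListColoring G L S c → S.card ≤ m) :
    lamL G L ≤ m := by
  refine csSup_le ⟨0, ∅, fun _ => 0, rfl, by simp [IsPartialListColoring]⟩ ?_
  rintro k ⟨S, c, rfl, hc⟩
  exact h S c hc

lemma lamL_image_le [Fintype V] (L : V → Finset ℕ) {f : ℕ → ℕ} (hf : f.Injective) :
    lamL G (fun v => (L v).image f) ≤ lamL G L :=
  lamL_le G fun _ _ hc => card_le_lamL G (hc.comp_invFun_of_image G hf)

lemma lamL_union_le [Fintype V] (L₁ L₂ : V → Finset ℕ) :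
    lamL G (fun v => L₁ v ∪ L₂ v) ≤ lamL G L₁ + lamL G L₂ := by
  classical
  refine lamL_le G fun S c hc => ?_
  have h₁ : (S.filter fun v => c v ∈ L₁ v).card ≤ lamL G L₁ :=
    card_le_lamL G <| hc.filter G _ fun _ _ hv₁ => hv₁
  have h₂ : (S.filter fun v => c v ∉ L₁ v).card ≤ lamL G L₂ :=
    card_le_lamL G <| hc.filter G _ fun v hvS hv₁ =>
      (Finset.mem_union.mp (hc.1 v hvS)).resolve_left hv₁
  rw [← Finset.card_filter_add_card_filter_not (fun v => c v ∈ L₁ v)]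
  exact add_le_add h₁ h₂

lemma lam_le_lamL {t : ℕ} {L : V → Finset ℕ} (hL : ∀ v, (L v).card = t) :
    lam G t ≤ lamL G L :=
  Nat.sInf_le ⟨L, hL, rfl⟩

lemma exists_lamL_eq_lam (t : ℕ) :
    ∃ L : V → Finset ℕ, (∀ v, (L v).card = t) ∧ lamL G L = lam G t :=
  Nat.sInf_mem (s := {m | ∃ L : V → Finset ℕ, (∀ v, (L v).card = t) ∧ lamL G L = m})
    ⟨_, fun _ => Finset.range t, fun _ => Finset.card_range t, rfl⟩

end

theorem lam_triangle_inequality_general {V : Type*} [Fintype V] (G : SimpleGraph V)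
    (r s : ℕ) :
    lam G (r + s) ≤ lam G r + lam G s := by
  obtain ⟨L₁, hL₁, hlam₁⟩ := exists_lamL_eq_lam G r
  obtain ⟨L₂, hL₂, hlam₂⟩ := exists_lamL_eq_lam G s
  have heven : Function.Injective (2 * · : ℕ → ℕ) := fun _ _ h => by simpa using h
  have hodd : Function.Injective (2 * · + 1 : ℕ → ℕ) := fun _ _ h => by simpa using h
  have hcard : ∀ v, ((L₁ v).image (2 * ·) ∪ (L₂ v).image (2 * · + 1)).card = r + s := by
    intro v
    rw [Finset.card_union_of_disjoint, Finset.card_image_of_injective _ heven,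
      Finset.card_image_of_injective _ hodd, hL₁, hL₂]
    simp only [Finset.disjoint_left, Finset.mem_image]
    omega
  calc lam G (r + s)
      ≤ lamL G fun v => (L₁ v).image (2 * ·) ∪ (L₂ v).image (2 * · + 1) :=
        lam_le_lamL G hcard
    _ ≤ lamL G (fun v => (L₁ v).image (2 * ·)) + lamL G (fun v => (L₂ v).image (2 * · + 1)) :=
        lamL_union_le G _ _
    _ ≤ lamL G L₁ + lamL G L₂ :=
        add_le_add (lamL_image_le G L₁ heven) (lamL_image_le G L₂ hodd)
    _ = lam G r + lam G s := by rw [hlam₁, hlam₂]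

theorem lam_triangle_inequality {V : Type*} [Fintype V] (G : SimpleGraph V)
    (r s : ℕ) (hr : 1 ≤ r) (hs : 1 ≤ s) :
    lam G (r + s) ≤ lam G r + lam G s :=
  lam_triangle_inequality_general G r s
end

section
/- Let G be a simple graph with n vertices and list chromatic number χ_ℓ = s, and let 1 ≤ r ≤ s. Then at least one of the inequalities χ_ℓ · λ_r(G) ≥ r·n and χ_ℓ · λ_{s−r}(G) ≥ (s−r)·n holds. -/
/-!
Given an `r`-list assignment `L₁` and an `(s - r)`-list assignment `L₂`, place the colours of
`L₁` on the even numbers and those of `L₂` on the odd numbers. The union is an `s`-list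
assignment, so it has a proper colouring when `s = χ_ℓ(G)`; the vertices receiving an even
colour are properly coloured from `L₁` and the others from `L₂`. Hence
`n ≤ λ_r(G) + λ_{s-r}(G)`, and multiplying by `s` and comparing with `r n + (s - r) n = s n`
shows that one of the two inequalities holds.
-/

open SimpleGraph

section EvenOddListUnion

variable {V : Type*}

def evenOddListUnion (L₁ L₂ : V → Finset ℕ) (v : V) : Finset ℕ :=
  (L₁ v).image (2 * ·) ∪ (L₂ v).image (2 * · + 1)

theorem card_evenOddListUnion (L₁ L₂ : V → Finset ℕ) (v : V) :
    (evenOddListUnion L₁ L₂ v).card = (L₁ v).card + (L₂ v).card := by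
  have hdisj : Disjoint ((L₁ v).image (2 * ·)) ((L₂ v).image (2 * · + 1)) := by
    simp only [Finset.disjoint_left, Finset.mem_image]
    omega
  rw [evenOddListUnion, Finset.card_union_of_disjoint hdisj,
    Finset.card_image_of_injective _ fun _ _ h => by simpa using h,
    Finset.card_image_of_injective _ fun _ _ h => by simpa using h]

theorem div_two_mem_of_mem_evenOddListUnion {L₁ L₂ : V → Finset ℕ} {v : V} {x : ℕ}
    (hx : x ∈ evenOddListUnion L₁ L₂ v) : x / 2 ∈ (if x % 2 = 0 then L₁ v else L₂ v) := by
  simp only [evenOddListUnion, Finset.mem_union, Finset.mem_image] at hx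
  rcases hx with ⟨y, hy, rfl⟩ | ⟨y, hy, rfl⟩
  · simpa using hy
  · have hdiv : (2 * y + 1) / 2 = y := by omega
    have hmod : (2 * y + 1) % 2 = 1 := by omega
    simpa [hdiv, hmod] using hy

end EvenOddListUnion

namespace SimpleGraph

variable {V : Type*} (G : SimpleGraph V)

theorem card_le_lamL [Fintype V] {L : V → Finset ℕ} {S : Finset V} {c : V → ℕ}
    (h : IsPartialListColoring G L S c) : S.card ≤ lamL G L := by
  refine le_csSup ⟨Fintype.card V, ?_⟩ ⟨S, c, rfl, h⟩
  rintro k ⟨T, -, rfl, -⟩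
  exact T.card_le_univ

theorem exists_lamL_eq_lam (t : ℕ) :
    ∃ L : V → Finset ℕ, (∀ v, (L v).card = t) ∧ lamL G L = lam G t :=
  Nat.sInf_mem (s := {m | ∃ L : V → Finset ℕ, (∀ v, (L v).card = t) ∧ lamL G L = m})
    ⟨_, fun _ => Finset.range t, fun _ => Finset.card_range t, rfl⟩

theorem listColorable_of_card_eq_listChromaticNumber (h : listChromaticNumber G ≠ 0)
    {L : V → Finset ℕ} (hL : ∀ v, (L v).card = listChromaticNumber G) : ListColorable G L := by
  have hne : {k | ∀ L : V → Finset ℕ, (∀ v, (L v).card = k) → ListColorable G L}.Nonempty := by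
    by_contra hempty
    rw [Set.not_nonempty_iff_eq_empty] at hempty
    rw [listChromaticNumber, hempty, Nat.sInf_empty] at h
    exact h rfl
  exact Nat.sInf_mem hne L hL

theorem card_le_lamL_add_lamL [Fintype V] {L₁ L₂ : V → Finset ℕ}
    (hcol : ListColorable G (evenOddListUnion L₁ L₂)) :
    Fintype.card V ≤ lamL G L₁ + lamL G L₂ := by
  classical
  obtain ⟨c, hcL, hcG⟩ := hcol
  set E : Finset V := Finset.univ.filter fun v => c v % 2 = 0
  have halves_ne {u v : V} (huv : G.Adj u v) (hpar : c u % 2 = c v % 2) : c u / 2 ≠ c v / 2 := by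
    have := hcG u v huv
    omega
  have hE : IsPartialListColoring G L₁ E (c · / 2) := by
    have heven {v : V} (hv : v ∈ (E : Set V)) : c v % 2 = 0 := by simpa [E] using hv
    refine ⟨fun v hv => ?_, fun u hu v hv huv => halves_ne huv ?_⟩
    · simpa [heven hv] using div_two_mem_of_mem_evenOddListUnion (hcL v)
    · rw [heven hu, heven hv]
  have hEc : IsPartialListColoring G L₂ (Eᶜ : Finset V) (c · / 2) := by
    have hodd {v : V} (hv : v ∈ ((Eᶜ : Finset V) : Set V)) : c v % 2 ≠ 0 := by simpa [E] using hv
    refine ⟨fun v hv => ?_, fun u hu v hv huv => halves_ne huv ?_⟩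
    · simpa [hodd hv] using div_two_mem_of_mem_evenOddListUnion (hcL v)
    · have := hodd hu
      have := hodd hv
      omega
  calc Fintype.card V = E.card + Eᶜ.card := (E.card_add_card_compl).symm
    _ ≤ lamL G L₁ + lamL G L₂ := add_le_add (G.card_le_lamL hE) (G.card_le_lamL hEc)

theorem card_le_lam_add_lam [Fintype V] {a b : ℕ}
    (hcol : ∀ L : V → Finset ℕ, (∀ v, (L v).card = a + b) → ListColorable G L) :
    Fintype.card V ≤ lam G a + lam G b := by
  obtain ⟨L₁, hL₁, hlam₁⟩ := G.exists_lamL_eq_lam a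
  obtain ⟨L₂, hL₂, hlam₂⟩ := G.exists_lamL_eq_lam b
  rw [← hlam₁, ← hlam₂]
  exact G.card_le_lamL_add_lamL (hcol _ fun v => by rw [card_evenOddListUnion, hL₁, hL₂])

end SimpleGraph

theorem agh_conjecture_half_general {V : Type*} [Fintype V] (G : SimpleGraph V)
    (r s : ℕ) (hs : listChromaticNumber G = s) (hrs : r ≤ s) :
    r * Fintype.card V ≤ s * lam G r ∨
      (s - r) * Fintype.card V ≤ s * lam G (s - r) := by
  rcases Nat.eq_zero_or_pos s with rfl | hspos
  · left
    simp [Nat.le_zero.mp hrs]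
  have hcol : ∀ L : V → Finset ℕ, (∀ v, (L v).card = r + (s - r)) → ListColorable G L := by
    intro L hL
    refine G.listColorable_of_card_eq_listChromaticNumber (by omega) fun v => ?_
    rw [hL, hs]
    omega
  have hsum : r * Fintype.card V + (s - r) * Fintype.card V ≤ s * lam G r + s * lam G (s - r) := by
    rw [← add_mul, Nat.add_sub_cancel' hrs, ← mul_add]
    exact Nat.mul_le_mul_left s (G.card_le_lam_add_lam hcol)
  omega

theorem agh_conjecture_half {V : Type*} [Fintype V] (G : SimpleGraph V)
    (r s : ℕ) (hs : listChromaticNumber G = s) (hr : 1 ≤ r) (hrs : r ≤ s) :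
    r * Fintype.card V ≤ s * lam G r ∨
      (s - r) * Fintype.card V ≤ s * lam G (s - r) :=
  agh_conjecture_half_general G r s hs hrs
end
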